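/- If g : (0,1) → [0,∞) is nonincreasing, then the decreasing rearrangement of g with respect to Lebesgue measure on (0,1) equals g almost everywhere. -/

import Mathlib

open MeasureTheory Set

/-- Decreasing rearrangement of `f` with respect to the measure `μ`:
`f*(t) = inf { λ : μ{f > λ} ≤ t }`. -/
noncomputable def rearr {Ω : Type*} [MeasurableSpace Ω] (μ : Measure Ω) (f : Ω → ℝ)
    (t : ℝ) : ℝ :=
  sInf {lam : ℝ | μ {x | lam < f x} ≤ ENNReal.ofReal t}

/-! For `s ∈ (0, b)`, monotonicity gives `{g > g s} ⊆ (0, s)`, so `g*(s) ≤ g(s)`. If moreover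
`g` is continuous at `s` and `λ < g(s)`, then `λ < g(s')` for some `s' ∈ (s, b)`, so
`{g > λ} ⊇ (0, s')` has measure `> s` and `λ` is not admissible: `g*(s) = g(s)`. A monotone
function is continuous off a countable, hence null, set. -/

open Filter

theorem rearr_eq_of_isLeast {Ω : Type*} [MeasurableSpace Ω] {μ : Measure Ω} {f : Ω → ℝ}
    {t c : ℝ}
    (hc : IsLeast {lam : ℝ | μ {x | lam < f x} ≤ ENNReal.ofReal t} c) : rearr μ f t = c :=
  hc.csInf_eq

namespace AntitoneOn

variable {g : ℝ → ℝ} {b s lam : ℝ}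

theorem volume_restrict_Ioo_setOf_lt_le (hg : AntitoneOn g (Ioo 0 b)) (hs : s ∈ Ioo 0 b) :
    volume.restrict (Ioo 0 b) {x | g s < g x} ≤ ENNReal.ofReal s := by
  rw [Measure.restrict_apply' measurableSet_Ioo]
  calc volume ({x | g s < g x} ∩ Ioo 0 b) ≤ volume (Ioo 0 s) :=
        measure_mono fun x ⟨hx, hx0b⟩ =>
          ⟨hx0b.1, not_le.1 fun hsx => (hg hs hx0b hsx).not_gt hx⟩
    _ = ENNReal.ofReal s := by rw [Real.volume_Ioo, sub_zero]

theorem ofReal_le_volume_restrict_Ioo_setOf_lt (hg : AntitoneOn g (Ioo 0 b)) (hs : s ∈ Ioo 0 b)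
    (hlam : lam < g s) : ENNReal.ofReal s ≤ volume.restrict (Ioo 0 b) {x | lam < g x} := by
  rw [Measure.restrict_apply' measurableSet_Ioo]
  calc ENNReal.ofReal s = volume (Ioo 0 s) := by rw [Real.volume_Ioo, sub_zero]
    _ ≤ volume ({x | lam < g x} ∩ Ioo 0 b) := by
        refine measure_mono fun x hx => ?_
        have hx0b : x ∈ Ioo 0 b := ⟨hx.1, hx.2.trans hs.2⟩
        exact ⟨hlam.trans_le (hg hx0b hs hx.2.le), hx0b⟩

theorem rearr_volume_restrict_Ioo_eq (hg : AntitoneOn g (Ioo 0 b)) (hs : s ∈ Ioo 0 b)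
    (hcont : ContinuousAt g s) : rearr (volume.restrict (Ioo 0 b)) g s = g s := by
  refine rearr_eq_of_isLeast ⟨hg.volume_restrict_Ioo_setOf_lt_le hs, fun lam hlam => ?_⟩
  by_contra! hlt
  obtain ⟨s', hss', hlam', hs'⟩ :=
    ((hcont.eventually (lt_mem_nhds hlt)).and (Ioo_mem_nhds hs.1 hs.2)).exists_gt
  have hle := (hg.ofReal_le_volume_restrict_Ioo_setOf_lt hs' hlam').trans hlam
  rw [ENNReal.ofReal_le_ofReal_iff hs.1.le] at hle
  exact hle.not_gt hss'

theorem ae_rearr_volume_restrict_Ioo_eq (hg : AntitoneOn g (Ioo 0 b)) :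
    ∀ᵐ s ∂volume.restrict (Ioo 0 b), rearr (volume.restrict (Ioo 0 b)) g s = g s := by
  have hcont : ∀ᵐ s ∂volume.restrict (Ioo 0 b),
      s ∉ {x ∈ Ioo 0 b | ¬ContinuousWithinAt g (Ioo 0 b) x} :=
    ae_restrict_of_ae (hg.countable_not_continuousWithinAt.ae_notMem volume)
  filter_upwards [ae_restrict_mem measurableSet_Ioo, hcont] with s hs hsc
  have hcs : ContinuousWithinAt g (Ioo 0 b) s := by_contra fun h => hsc ⟨hs, h⟩
  exact hg.rearr_volume_restrict_Ioo_eq hs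
    ((continuousWithinAt_iff_continuousAt (Ioo_mem_nhds hs.1 hs.2)).1 hcs)

end AntitoneOn

theorem rearr_of_antitone_general (g : ℝ → ℝ)
    (hg_anti : AntitoneOn g (Ioo (0:ℝ) 1)) :
    ∀ᵐ s ∂(volume.restrict (Ioo (0:ℝ) 1)),
      rearr (volume.restrict (Ioo (0:ℝ) 1)) g s = g s :=
  hg_anti.ae_rearr_volume_restrict_Ioo_eq

/-- If `g : (0,1) → [0,∞)` is nonincreasing, then its decreasing rearrangement with
respect to Lebesgue measure on `(0,1)` equals `g` almost everywhere on `(0,1)`. -/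
theorem rearr_of_antitone (g : ℝ → ℝ)
    (hg_nonneg : ∀ s ∈ Ioo (0:ℝ) 1, 0 ≤ g s)
    (hg_anti : AntitoneOn g (Ioo (0:ℝ) 1)) :
    ∀ᵐ s ∂(volume.restrict (Ioo (0:ℝ) 1)),
      rearr (volume.restrict (Ioo (0:ℝ) 1)) g s = g s :=
  rearr_of_antitone_general g hg_anti
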